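/- Let A = M − N be a splitting of A ∈ ℝ^{n×n}, let b ∈ ℝⁿ, θ ∈ [0,1), and let Ω ∈ ℝ^{n×n} be such that Ω + M is invertible. Suppose x* satisfies the absolute value equation Ax* − |x*| − b = 0 and ‖(Ω+M)^{-1}‖ < 1/[θ(‖Ω+M‖ + ‖Ω+N‖ + 1) + ‖Ω+N‖ + 1]. Then any sequence {x^k} in ℝⁿ satisfying ‖(Ω+M)x^{k+1} − [(Ω+N)x^k + |x^k| + b]‖ ≤ θ‖Ax^k − |x^k| − b‖ for all k ≥ 0 converges linearly to x* from any starting point x^0. -/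

import Mathlib

open Matrix Filter

/-- Componentwise absolute value of a vector in Euclidean space. -/
noncomputable def vabs {n : ℕ} (x : EuclideanSpace ℝ (Fin n)) : EuclideanSpace ℝ (Fin n) :=
  WithLp.toLp 2 (fun i => |x i|)

/-- A matrix acting on Euclidean space (so that vector norms are the Euclidean 2-norm). -/
noncomputable def mulV {n : ℕ} (M : Matrix (Fin n) (Fin n) ℝ) (x : EuclideanSpace ℝ (Fin n)) :
    EuclideanSpace ℝ (Fin n) :=
  Matrix.toEuclideanCLM (𝕜 := ℝ) M x

/-- Spectral norm of a real matrix: the operator norm induced by the Euclidean vector norm. -/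
noncomputable def spec {n : ℕ} (M : Matrix (Fin n) (Fin n) ℝ) : ℝ :=
  ‖Matrix.toEuclideanCLM (𝕜 := ℝ) M‖

/-- The GAVE residual function `F(x) = A x − B |x| − b`. -/
noncomputable def gaveF {n : ℕ} (A B : Matrix (Fin n) (Fin n) ℝ)
    (b : EuclideanSpace ℝ (Fin n)) (x : EuclideanSpace ℝ (Fin n)) : EuclideanSpace ℝ (Fin n) :=
  mulV A x - mulV B (vabs x) - b

/-- The AVE residual function `A x − |x| − b` (the GAVE with `B = I`). -/
noncomputable def aveF {n : ℕ} (A : Matrix (Fin n) (Fin n) ℝ)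
    (b : EuclideanSpace ℝ (Fin n)) (x : EuclideanSpace ℝ (Fin n)) : EuclideanSpace ℝ (Fin n) :=
  mulV A x - vabs x - b

/-- A sequence converges linearly to `xs`: the distances to `xs` contract by a fixed
factor `c < 1` at every step, and the sequence tends to `xs`. -/
def ConvergesLinearlyTo {n : ℕ} (x : ℕ → EuclideanSpace ℝ (Fin n))
    (xs : EuclideanSpace ℝ (Fin n)) : Prop :=
  (∃ c : ℝ, 0 ≤ c ∧ c < 1 ∧ ∀ k : ℕ, ‖x (k + 1) - xs‖ ≤ c * ‖x k - xs‖) ∧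
    Tendsto x atTop (nhds xs)

/-!
Write `P = Ω + M`, `Q = Ω + N`, so `A = P − Q` and the solution satisfies `P x* = Q x* + |x*| + b`.
Subtracting this from the inexact step and using that `|·|` is 1-Lipschitz gives
`‖P (x^{k+1} − x*)‖ ≤ θ ‖A x^k − |x^k| − b‖ + (‖Q‖ + 1) ‖x^k − x*‖`, and the residual is at most
`(‖A‖ + 1) ‖x^k − x*‖ ≤ (‖P‖ + ‖Q‖ + 1) ‖x^k − x*‖`. Applying `P⁻¹`, the error contracts by the factor
`‖P⁻¹‖ (θ (‖P‖ + ‖Q‖ + 1) + ‖Q‖ + 1)`, which the hypothesis makes smaller than `1`.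
-/

section

variable {n : ℕ}

lemma norm_vabs_sub_vabs_le (x y : EuclideanSpace ℝ (Fin n)) : ‖vabs x - vabs y‖ ≤ ‖x - y‖ := by
  rw [EuclideanSpace.norm_eq, EuclideanSpace.norm_eq]
  refine Real.sqrt_le_sqrt (Finset.sum_le_sum fun i _ => pow_le_pow_left₀ (norm_nonneg _) ?_ 2)
  simp only [vabs, PiLp.sub_apply, Real.norm_eq_abs]
  exact abs_abs_sub_abs_le_abs_sub _ _

lemma spec_nonneg (M : Matrix (Fin n) (Fin n) ℝ) : 0 ≤ spec M :=
  norm_nonneg _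

lemma spec_sub_le (M N : Matrix (Fin n) (Fin n) ℝ) : spec (M - N) ≤ spec M + spec N := by
  simp only [spec, map_sub]
  exact norm_sub_le _ _

lemma norm_mulV_le (M : Matrix (Fin n) (Fin n) ℝ) (v : EuclideanSpace ℝ (Fin n)) :
    ‖mulV M v‖ ≤ spec M * ‖v‖ :=
  (toEuclideanCLM (𝕜 := ℝ) M).le_opNorm v

lemma mulV_sub (M : Matrix (Fin n) (Fin n) ℝ) (v w : EuclideanSpace ℝ (Fin n)) :
    mulV M (v - w) = mulV M v - mulV M w := by
  simp [mulV]

lemma sub_mulV (M N : Matrix (Fin n) (Fin n) ℝ) (v : EuclideanSpace ℝ (Fin n)) :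
    mulV (M - N) v = mulV M v - mulV N v := by
  simp [mulV]

lemma mulV_nonsing_inv_mulV {M : Matrix (Fin n) (Fin n) ℝ} (hM : IsUnit M)
    (v : EuclideanSpace ℝ (Fin n)) : mulV M⁻¹ (mulV M v) = v := by
  have h : mulV (M⁻¹ * M) v = mulV M⁻¹ (mulV M v) := by simp [mulV]
  rw [← h, nonsing_inv_mul M ((isUnit_iff_isUnit_det M).mp hM)]
  simp [mulV]

lemma norm_le_spec_nonsing_inv_mul {M : Matrix (Fin n) (Fin n) ℝ} (hM : IsUnit M)
    (v : EuclideanSpace ℝ (Fin n)) : ‖v‖ ≤ spec M⁻¹ * ‖mulV M v‖ := by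
  simpa only [mulV_nonsing_inv_mulV hM] using norm_mulV_le M⁻¹ (mulV M v)

variable {A : Matrix (Fin n) (Fin n) ℝ} {b xs : EuclideanSpace ℝ (Fin n)}

lemma mulV_eq_of_aveF_eq_zero (hxs : aveF A b xs = 0) : mulV A xs = vabs xs + b := by
  rw [aveF, sub_sub, sub_eq_zero] at hxs
  exact hxs

lemma norm_aveF_le (hxs : aveF A b xs = 0) (y : EuclideanSpace ℝ (Fin n)) :
    ‖aveF A b y‖ ≤ (spec A + 1) * ‖y - xs‖ := by
  have hres : aveF A b y = mulV A (y - xs) - (vabs y - vabs xs) := by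
    rw [aveF, mulV_sub, mulV_eq_of_aveF_eq_zero hxs]; abel
  calc ‖aveF A b y‖ ≤ ‖mulV A (y - xs)‖ + ‖vabs y - vabs xs‖ := hres ▸ norm_sub_le _ _
    _ ≤ spec A * ‖y - xs‖ + ‖y - xs‖ := add_le_add (norm_mulV_le _ _) (norm_vabs_sub_vabs_le _ _)
    _ = (spec A + 1) * ‖y - xs‖ := by ring

lemma norm_mulV_sub_le_of_splitting {P Q : Matrix (Fin n) (Fin n) ℝ} (hA : A = P - Q)
    (hxs : aveF A b xs = 0) (y z : EuclideanSpace ℝ (Fin n)) :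
    ‖mulV P (z - xs)‖ ≤ ‖mulV P z - (mulV Q y + vabs y + b)‖ + (spec Q + 1) * ‖y - xs‖ := by
  have hfix : mulV P xs = mulV Q xs + vabs xs + b := by
    rw [add_assoc, ← mulV_eq_of_aveF_eq_zero hxs, hA, sub_mulV]; abel
  have hid : mulV P (z - xs) =
      (mulV P z - (mulV Q y + vabs y + b)) + mulV Q (y - xs) + (vabs y - vabs xs) := by
    rw [mulV_sub, mulV_sub, hfix]; abel
  calc ‖mulV P (z - xs)‖
      ≤ ‖mulV P z - (mulV Q y + vabs y + b)‖ + ‖mulV Q (y - xs)‖ + ‖vabs y - vabs xs‖ :=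
        hid ▸ norm_add₃_le
    _ ≤ ‖mulV P z - (mulV Q y + vabs y + b)‖ + spec Q * ‖y - xs‖ + ‖y - xs‖ := by
        gcongr
        · exact norm_mulV_le _ _
        · exact norm_vabs_sub_vabs_le _ _
    _ = ‖mulV P z - (mulV Q y + vabs y + b)‖ + (spec Q + 1) * ‖y - xs‖ := by ring

lemma ConvergesLinearlyTo.of_contraction {x : ℕ → EuclideanSpace ℝ (Fin n)} {c : ℝ}
    (hc0 : 0 ≤ c) (hc1 : c < 1) (h : ∀ k, ‖x (k + 1) - xs‖ ≤ c * ‖x k - xs‖) :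
    ConvergesLinearlyTo x xs := by
  refine ⟨⟨c, hc0, hc1, h⟩, ?_⟩
  have hgeom : Tendsto (fun k => c ^ k * ‖x 0 - xs‖) atTop (nhds 0) := by
    simpa using (tendsto_pow_atTop_nhds_zero_of_lt_one hc0 hc1).mul_const ‖x 0 - xs‖
  rw [tendsto_iff_norm_sub_tendsto_zero]
  exact squeeze_zero (fun _ => norm_nonneg _)
    (fun k => le_geom (u := fun k => ‖x k - xs‖) hc0 k fun j _ => h j) hgeom

end

theorem stmt9_general {n : ℕ} (A M N Ω : Matrix (Fin n) (Fin n) ℝ)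
    (b : EuclideanSpace ℝ (Fin n)) (hA : A = M - N) (θ : ℝ) (hθ0 : 0 ≤ θ)
    (hinv : IsUnit (Ω + M))
    (xs : EuclideanSpace ℝ (Fin n)) (hxs : aveF A b xs = 0)
    (hcond : spec (Ω + M)⁻¹ <
      1 / (θ * (spec (Ω + M) + spec (Ω + N) + 1) + spec (Ω + N) + 1))
    (x : ℕ → EuclideanSpace ℝ (Fin n))
    (hx : ∀ k : ℕ, ‖mulV (Ω + M) (x (k + 1)) - (mulV (Ω + N) (x k) + vabs (x k) + b)‖ ≤
      θ * ‖aveF A b (x k)‖) :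
    ConvergesLinearlyTo x xs := by
  have hsplit : A = (Ω + M) - (Ω + N) := by rw [hA]; abel
  set P := Ω + M
  set Q := Ω + N
  have hD : 0 < θ * (spec P + spec Q + 1) + spec Q + 1 :=
    one_div_pos.mp ((spec_nonneg _).trans_lt hcond)
  refine ConvergesLinearlyTo.of_contraction (mul_nonneg (spec_nonneg _) hD.le)
    (by rwa [lt_div_iff₀ hD] at hcond) fun k => ?_
  have hres : ‖aveF A b (x k)‖ ≤ (spec P + spec Q + 1) * ‖x k - xs‖ :=
    (norm_aveF_le hxs _).trans <| by gcongr; exact hsplit ▸ spec_sub_le P Q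
  calc ‖x (k + 1) - xs‖ ≤ spec P⁻¹ * ‖mulV P (x (k + 1) - xs)‖ :=
        norm_le_spec_nonsing_inv_mul hinv _
    _ ≤ spec P⁻¹ * (θ * ‖aveF A b (x k)‖ + (spec Q + 1) * ‖x k - xs‖) := by
        gcongr
        · exact spec_nonneg _
        · exact (norm_mulV_sub_le_of_splitting hsplit hxs _ _).trans (by gcongr; exact hx k)
    _ ≤ spec P⁻¹ * (θ * ((spec P + spec Q + 1) * ‖x k - xs‖) + (spec Q + 1) * ‖x k - xs‖) := by
        gcongr
        exact spec_nonneg _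
    _ = spec P⁻¹ * (θ * (spec P + spec Q + 1) + spec Q + 1) * ‖x k - xs‖ := by ring

theorem stmt9 {n : ℕ} (A M N Ω : Matrix (Fin n) (Fin n) ℝ)
    (b : EuclideanSpace ℝ (Fin n)) (hA : A = M - N) (θ : ℝ) (hθ0 : 0 ≤ θ) (hθ1 : θ < 1)
    (hinv : IsUnit (Ω + M))
    (xs : EuclideanSpace ℝ (Fin n)) (hxs : aveF A b xs = 0)
    (hcond : spec (Ω + M)⁻¹ <
      1 / (θ * (spec (Ω + M) + spec (Ω + N) + 1) + spec (Ω + N) + 1))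
    (x : ℕ → EuclideanSpace ℝ (Fin n))
    (hx : ∀ k : ℕ, ‖mulV (Ω + M) (x (k + 1)) - (mulV (Ω + N) (x k) + vabs (x k) + b)‖ ≤
      θ * ‖aveF A b (x k)‖) :
    ConvergesLinearlyTo x xs :=
  stmt9_general A M N Ω b hA θ hθ0 hinv xs hxs hcond x hx
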